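/- arXiv:1707.05221 — 4 statements merged into one kernel-verified Lean document; each statement's English description precedes it below -/
import Mathlib

section
/- Let d ≥ 1, α ∈ (1, 2) and ε ∈ (0, 1/2), and let D_ε = {y ∈ ℝ^d : |y| ≤ 1−ε}. There exists a constant κ > 0 (depending only on d, α, ε) such that for every x ∈ D_ε and every t with 0 < t < ε^α, ∫_{D_ε} min( t^{−d/α}, t/|x−y|^{α+d} ) dy ≥ κ. -/
/-!
Put `ρ = t^(1/α) < ε`. For `|x - y| ≤ ρ` the kernel is at its cap:
`t / |x - y|^(α+d) ≥ t / ρ^(α+d) = t^(-d/α)`. Shrinking `x` radially towards the origin gives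
a ball of radius `ρ / 2` inside `D_ε` all of whose points lie within `ρ` of `x`, so the integral
is at least `t^(-d/α) · |B(0,1)| (ρ/2)^d = |B(0,1)| / 2^d`, independently of `x` and `t`.
-/

open MeasureTheory Metric Module

theorem exists_dist_le_closedBall_subset_closedBall {E : Type*} [NormedAddCommGroup E]
    [NormedSpace ℝ E] {c x : E} {r R : ℝ} (hx : x ∈ closedBall c R) (hr : 0 ≤ r)
    (hrR : r ≤ R) : ∃ z, dist x z ≤ r ∧ closedBall z r ⊆ closedBall c R := by
  rw [mem_closedBall, dist_comm] at hx
  rcases hr.eq_or_lt with rfl | hr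
  · exact ⟨x, by simp, closedBall_subset_closedBall' (by rwa [zero_add, dist_comm])⟩
  have hR : 0 < R := hr.trans_le hrR
  refine ⟨AffineMap.lineMap c x (1 - r / R), ?_, closedBall_subset_closedBall' ?_⟩
  · rw [dist_comm, dist_lineMap_right, sub_sub_cancel, Real.norm_of_nonneg (by positivity)]
    calc r / R * dist c x ≤ r / R * R := by gcongr
      _ = r := div_mul_cancel₀ r hR.ne'
  · have hs : 0 ≤ 1 - r / R := by rw [sub_nonneg, div_le_one hR]; exact hrR
    rw [dist_lineMap_left, Real.norm_of_nonneg hs]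
    calc r + (1 - r / R) * dist c x ≤ r + (1 - r / R) * R := by gcongr
      _ = R := by field_simp; ring

theorem mul_measureReal_le_setIntegral {X : Type*} [MeasurableSpace X] {μ : Measure X}
    {f : X → ℝ} {c : ℝ} {s t : Set X} (hst : s ⊆ t) (hs : MeasurableSet s)
    (hμs : μ s ≠ ⊤) (hcf : ∀ᵐ x ∂μ, x ∈ s → c ≤ f x) (hf : IntegrableOn f t μ)
    (hf₀ : 0 ≤ᵐ[μ.restrict t] f) :
    c * μ.real s ≤ ∫ x in t, f x ∂μ :=
  calc c * μ.real s = ∫ _ in s, c ∂μ := by rw [setIntegral_const, smul_eq_mul, mul_comm]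
    _ ≤ ∫ x in s, f x ∂μ :=
      setIntegral_mono_on_ae (integrableOn_const hμs) (hf.mono_set hst) hs hcf
    _ ≤ ∫ x in t, f x ∂μ := setIntegral_mono_set hf hf₀ hst.eventuallyLE

noncomputable def stableProfile (d α t u : ℝ) : ℝ := min (t ^ (-d / α)) (t / u ^ (α + d))

section stableProfile

variable {d α t u : ℝ}

theorem stableProfile_le : stableProfile d α t u ≤ t ^ (-d / α) := min_le_left _ _

theorem stableProfile_nonneg (ht : 0 ≤ t) (hu : 0 ≤ u) : 0 ≤ stableProfile d α t u :=
  le_min (by positivity) (by positivity)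

theorem stableProfile_eq_of_le_rpow_inv (hd : 0 ≤ d) (hα : 0 < α) (ht : 0 < t) (hu : 0 < u)
    (hut : u ≤ t ^ α⁻¹) : stableProfile d α t u = t ^ (-d / α) := by
  refine min_eq_left ?_
  calc t ^ (-d / α) = t ^ (1 - α⁻¹ * (α + d)) := by congr 1; field_simp; ring
    _ = t / (t ^ α⁻¹) ^ (α + d) := by rw [Real.rpow_sub ht, Real.rpow_one, Real.rpow_mul ht.le]
    _ ≤ t / u ^ (α + d) := by gcongr

end stableProfile

theorem integrableOn_stableProfile {E : Type*} [NormedAddCommGroup E] [MeasurableSpace E]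
    [OpensMeasurableSpace E] {μ : Measure E} {D : Set E} (hD : μ D ≠ ⊤) {d α t : ℝ}
    (ht : 0 ≤ t) (x : E) : IntegrableOn (fun y ↦ stableProfile d α t ‖x - y‖) D μ := by
  have hmeas : Measurable fun y ↦ stableProfile d α t ‖x - y‖ :=
    measurable_const.min <| measurable_const.div <|
      (continuous_const.sub continuous_id).norm.measurable.pow_const _
  refine Measure.integrableOn_of_bounded hD hmeas.aestronglyMeasurable
    (M := t ^ (-d / α)) (ae_of_all _ fun y ↦ ?_)
  rw [Real.norm_of_nonneg (stableProfile_nonneg ht (norm_nonneg _))]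
  exact stableProfile_le

section AddHaar

variable {E : Type*} [NormedAddCommGroup E] [NormedSpace ℝ E] [FiniteDimensional ℝ E]
  [MeasurableSpace E] [BorelSpace E] (μ : Measure E) [μ.IsAddHaarMeasure] {α t : ℝ}

theorem rpow_neg_div_mul_measureReal_closedBall_rpow_inv (hα : α ≠ 0) (ht : 0 < t) (z : E) :
    t ^ (-(finrank ℝ E : ℝ) / α) * μ.real (closedBall z (t ^ α⁻¹ / 2)) =
      μ.real (closedBall 0 1) / 2 ^ finrank ℝ E := by
  have hcancel : t ^ (-(finrank ℝ E : ℝ) / α) * (t ^ α⁻¹) ^ finrank ℝ E = 1 := by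
    rw [← Real.rpow_natCast, ← Real.rpow_mul ht.le, ← Real.rpow_add ht]
    convert Real.rpow_zero t using 2
    field_simp; ring
  rw [Measure.addHaar_real_closedBall' μ z (by positivity), div_pow, ← mul_assoc,
    mul_div_assoc', hcancel, one_div_mul_eq_div]

theorem measureReal_closedBall_div_two_pow_le_setIntegral_stableProfile [Nontrivial E]
    (hα : 0 < α) (ht : 0 < t) {x z : E} {D : Set E} (hD : μ D ≠ ⊤)
    (hzD : closedBall z (t ^ α⁻¹ / 2) ⊆ D) (hxz : dist x z ≤ t ^ α⁻¹ / 2) :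
    μ.real (closedBall 0 1) / 2 ^ finrank ℝ E ≤
      ∫ y in D, stableProfile (finrank ℝ E) α t ‖x - y‖ ∂μ := by
  have hcap : ∀ y ∈ closedBall z (t ^ α⁻¹ / 2), y ≠ x →
      stableProfile (finrank ℝ E) α t ‖x - y‖ = t ^ (-(finrank ℝ E : ℝ) / α) := by
    intro y hy hyx
    refine stableProfile_eq_of_le_rpow_inv (Nat.cast_nonneg _) hα ht
      (norm_pos_iff.2 (sub_ne_zero.2 hyx.symm)) ?_
    rw [← dist_eq_norm]
    linarith [dist_triangle x z y, mem_closedBall'.1 hy]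
  rw [← rpow_neg_div_mul_measureReal_closedBall_rpow_inv μ hα.ne' ht z]
  refine mul_measureReal_le_setIntegral hzD measurableSet_closedBall
    measure_closedBall_lt_top.ne ?_ (integrableOn_stableProfile hD ht.le x)
    (ae_of_all _ fun y ↦ stableProfile_nonneg ht.le (norm_nonneg _))
  filter_upwards [μ.ae_ne x] with y hyx hy using (hcap y hy hyx).ge

end AddHaar

/-- Lower bound for the integral over `D_ε` of the α-stable kernel profile:
there is `κ > 0` such that for every `x ∈ D_ε` and `0 < t < ε^α`,
`∫_{D_ε} min(t^(-d/α), t/|x-y|^(α+d)) dy ≥ κ`. -/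
theorem stable_kernel_integral_lower (d : ℕ) (hd : 1 ≤ d) (α ε : ℝ)
    (hα : α ∈ Set.Ioo (1 : ℝ) 2) (hε : ε ∈ Set.Ioo 0 (1 / 2 : ℝ)) :
    ∃ κ : ℝ, 0 < κ ∧
      ∀ x ∈ Metric.closedBall (0 : EuclideanSpace ℝ (Fin d)) (1 - ε),
        ∀ t : ℝ, 0 < t → t < ε ^ α →
          κ ≤ ∫ y in Metric.closedBall (0 : EuclideanSpace ℝ (Fin d)) (1 - ε),
                min (t ^ (-(d : ℝ) / α)) (t / ‖x - y‖ ^ (α + (d : ℝ))) := by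
  have hα₀ : 0 < α := by linarith [hα.1]
  have : Nonempty (Fin d) := ⟨⟨0, hd⟩⟩
  refine ⟨volume.real (closedBall (0 : EuclideanSpace ℝ (Fin d)) 1) / 2 ^ d, ?_, ?_⟩
  · exact div_pos (ENNReal.toReal_pos (measure_closedBall_pos _ _ one_pos).ne'
      measure_closedBall_lt_top.ne) (by positivity)
  intro x hx t ht htε
  have hρε : t ^ α⁻¹ < ε := by
    simpa [Real.rpow_rpow_inv hε.1.le hα₀.ne'] using
      Real.rpow_lt_rpow ht.le htε (inv_pos.2 hα₀)
  obtain ⟨z, hxz, hzD⟩ := exists_dist_le_closedBall_subset_closedBall hx (by positivity)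
    (show t ^ α⁻¹ / 2 ≤ 1 - ε by linarith [hε.2])
  have h := measureReal_closedBall_div_two_pow_le_setIntegral_stableProfile volume hα₀ ht
    measure_closedBall_lt_top.ne hzD hxz
  rwa [finrank_euclideanSpace_fin] at h
end

section
/- Let d ≥ 1, 0 < β < d and ε ∈ (0, 1/2), and let D_ε = {y ∈ ℝ^d : |y| ≤ 1−ε}. There exists a constant κ > 0 (depending only on d, β, ε) such that for every r with 0 < r ≤ 1−ε and all x, w ∈ D_ε with |x−w| ≤ r, ∫_{D_ε} ∫_{D_ε} 1_{\{|x−y| ≤ r\}} 1_{\{|w−z| ≤ r\}} |y−z|^{−β} dy dz ≥ κ r^{2d−β}. -/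
/-!
Shifting the centre of `closedBall x r` towards the origin by `r / 2` gives a ball of radius
`r / 2` inside both `closedBall x r` and `D_ε`; likewise for `w`. For `y`, `z` in these two
balls, `‖y - z‖ ≤ 3 r`, so the integrand is at least `(3 r) ^ (-β)` there and the double
integral is at least `(3 r) ^ (-β) (ω (r / 2) ^ d) ^ 2`, where `ω` is the volume of the unit
ball. The bound is not vacuous because `β < d` makes `‖u‖ ^ (-β)` locally integrable, so all
the Bochner integrals involved are genuine (uniformly in `y`, by translation invariance).
-/

open MeasureTheory Metric Set

lemma exists_closedBall_subset_closedBall_zero_inter {F : Type*} [NormedAddCommGroup F]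
    [NormedSpace ℝ F] {ρ r : ℝ} {v : F} (hv : v ∈ closedBall 0 ρ) (hr : 0 < r)
    (hrρ : r ≤ 2 * ρ) : ∃ c, closedBall c (r / 2) ⊆ closedBall 0 ρ ∩ closedBall v r := by
  rw [mem_closedBall_zero_iff] at hv
  have hρ : 0 < ρ := by linarith
  set t := r / (2 * ρ)
  have ht0 : 0 ≤ t := by positivity
  have ht1 : t ≤ 1 := div_le_one_of_le₀ hrρ (by linarith)
  have htρ : t * ρ = r / 2 := by simp only [t]; field_simp
  refine ⟨(1 - t) • v, fun u hu => ⟨?_, ?_⟩⟩ <;> rw [mem_closedBall, dist_eq_norm] at *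
  · calc ‖u - 0‖ ≤ ‖u - (1 - t) • v‖ + ‖(1 - t) • v‖ := by
          simpa using norm_le_norm_sub_add u _
      _ ≤ r / 2 + (1 - t) * ρ := by
        rw [norm_smul, Real.norm_of_nonneg (by linarith)]
        gcongr
      _ = ρ := by linarith
  · calc ‖u - v‖ ≤ ‖u - (1 - t) • v‖ + ‖(1 - t) • v - v‖ :=
          norm_sub_le_norm_sub_add_norm_sub _ _ _
      _ = ‖u - (1 - t) • v‖ + t * ‖v‖ := by
        rw [show (1 - t) • v - v = (-t) • v by module, norm_smul, Real.norm_eq_abs, abs_neg,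
          abs_of_nonneg ht0]
      _ ≤ r / 2 + t * ρ := by gcongr
      _ = r := by linarith

lemma rpow_neg_three_mul_le_rpow_neg_norm_sub {F : Type*} [NormedAddCommGroup F]
    {β r : ℝ} {x w y z : F} (hβ : 0 ≤ β) (hyx : dist y x ≤ r) (hxw : dist x w ≤ r)
    (hzw : dist z w ≤ r) (hyz : y ≠ z) : (3 * r) ^ (-β) ≤ ‖y - z‖ ^ (-β) := by
  refine Real.rpow_le_rpow_of_nonpos (norm_pos_iff.2 (sub_ne_zero.2 hyz)) ?_ (by linarith)
  calc ‖y - z‖ = dist y z := (dist_eq_norm y z).symm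
    _ ≤ dist y x + dist x w + dist w z := dist_triangle4 y x w z
    _ ≤ 3 * r := by linarith [dist_comm w z]

section IndicatorProduct

variable {α : Type*} (s t : Set α) (y z : α) {K : ℝ}

lemma indicator_one_mul_indicator_one_mul_nonneg (hK : 0 ≤ K) :
    0 ≤ s.indicator 1 y * t.indicator 1 z * K := by
  by_cases hy : y ∈ s <;> by_cases hz : z ∈ t <;> simp [hy, hz, hK]

lemma indicator_one_mul_indicator_one_mul_le (hK : 0 ≤ K) :
    s.indicator 1 y * t.indicator 1 z * K ≤ K := by
  by_cases hy : y ∈ s <;> by_cases hz : z ∈ t <;> simp [hy, hz, hK]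

end IndicatorProduct

lemma eqOn_rpow_neg_norm_sub {E : Type*} [NormedAddCommGroup E] {β : ℝ} (y : E) (D : ℝ) :
    EqOn (fun z => ‖y - z‖ ^ (-β))
      (fun z => (closedBall 0 D).indicator (fun u => ‖u‖ ^ (-β)) (z - y)) (closedBall y D) := by
  intro z hz
  dsimp only
  rw [indicator_of_mem (by simpa [dist_eq_norm] using hz), norm_sub_rev]

section RieszKernel

variable {E : Type*} [NormedAddCommGroup E] [NormedSpace ℝ E] [FiniteDimensional ℝ E]
  [MeasurableSpace E] [BorelSpace E] {μ : Measure E} [μ.IsAddHaarMeasure] {β : ℝ}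

lemma integrableOn_closedBall_rpow_neg_norm (hd : 1 ≤ Module.finrank ℝ E)
    (hβ : β < Module.finrank ℝ E) (D : ℝ) :
    IntegrableOn (fun u : E => ‖u‖ ^ (-β)) (closedBall 0 D) μ := by
  refine (locallyIntegrable_of_norm_le_rpow (C := 1) hd hβ (ae_of_all _ fun u => ?_)
    (by fun_prop : Measurable _).aestronglyMeasurable).integrableOn_isCompact
    (isCompact_closedBall 0 D)
  rw [one_mul, Real.norm_of_nonneg (by positivity)]

lemma integrable_indicator_closedBall_rpow_neg_norm_comp_sub (hd : 1 ≤ Module.finrank ℝ E)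
    (hβ : β < Module.finrank ℝ E) (y : E) (D : ℝ) :
    Integrable (fun z => (closedBall 0 D).indicator (fun u : E => ‖u‖ ^ (-β)) (z - y)) μ :=
  ((integrable_indicator_iff measurableSet_closedBall).2
    (integrableOn_closedBall_rpow_neg_norm hd hβ D)).comp_sub_right y

variable {s : Set E} {y : E} {D : ℝ}

lemma integrableOn_rpow_neg_norm_sub (hd : 1 ≤ Module.finrank ℝ E)
    (hβ : β < Module.finrank ℝ E) (hs : s ⊆ closedBall y D) :
    IntegrableOn (fun z => ‖y - z‖ ^ (-β)) s μ :=
  ((integrable_indicator_closedBall_rpow_neg_norm_comp_sub hd hβ y D).integrableOn.congr_fun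
    (eqOn_rpow_neg_norm_sub y D).symm measurableSet_closedBall).mono_set hs

lemma setIntegral_rpow_neg_norm_sub_le (hd : 1 ≤ Module.finrank ℝ E)
    (hβ : β < Module.finrank ℝ E) (hs : s ⊆ closedBall y D) :
    ∫ z in s, ‖y - z‖ ^ (-β) ∂μ ≤ ∫ u in closedBall 0 D, ‖u‖ ^ (-β) ∂μ := by
  have hK := integrable_indicator_closedBall_rpow_neg_norm_comp_sub (μ := μ) hd hβ y D
  calc ∫ z in s, ‖y - z‖ ^ (-β) ∂μ ≤ ∫ z in closedBall y D, ‖y - z‖ ^ (-β) ∂μ :=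
        setIntegral_mono_set (integrableOn_rpow_neg_norm_sub hd hβ le_rfl)
          (ae_of_all _ fun z => by positivity) hs.eventuallyLE
    _ = ∫ z in closedBall y D, (closedBall 0 D).indicator (fun u => ‖u‖ ^ (-β)) (z - y) ∂μ :=
        setIntegral_congr_fun measurableSet_closedBall (eqOn_rpow_neg_norm_sub y D)
    _ ≤ ∫ z, (closedBall 0 D).indicator (fun u => ‖u‖ ^ (-β)) (z - y) ∂μ :=
        setIntegral_le_integral hK
          (ae_of_all _ fun z => indicator_nonneg (fun u _ => by positivity) _)
    _ = ∫ u in closedBall 0 D, ‖u‖ ^ (-β) ∂μ := by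
        rw [integral_sub_right_eq_self, integral_indicator measurableSet_closedBall]

variable {f : E → E → ℝ} {B : Set E}

lemma integrableOn_of_le_rpow_neg_norm_sub (hd : 1 ≤ Module.finrank ℝ E)
    (hβ : β < Module.finrank ℝ E) (hB : Bornology.IsBounded B)
    (hf : Measurable (Function.uncurry f))
    (hf0 : ∀ y z, 0 ≤ f y z) (hfK : ∀ y z, f y z ≤ ‖y - z‖ ^ (-β)) (hy : y ∈ B) :
    IntegrableOn (f y) B μ := by
  obtain ⟨D, hD⟩ := isBounded_iff.1 hB
  refine Integrable.mono'
    (integrableOn_rpow_neg_norm_sub hd hβ fun z hz => mem_closedBall.2 (hD hz hy))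
    (hf.comp measurable_prodMk_left).aestronglyMeasurable (ae_of_all _ fun z => ?_)
  rw [Real.norm_of_nonneg (hf0 y z)]
  exact hfK y z

lemma integrableOn_setIntegral_of_le_rpow_neg_norm_sub (hd : 1 ≤ Module.finrank ℝ E)
    (hβ : β < Module.finrank ℝ E) (hB : Bornology.IsBounded B) (hBm : MeasurableSet B)
    (hf : Measurable (Function.uncurry f))
    (hf0 : ∀ y z, 0 ≤ f y z) (hfK : ∀ y z, f y z ≤ ‖y - z‖ ^ (-β)) :
    IntegrableOn (fun y => ∫ z in B, f y z ∂μ) B μ := by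
  obtain ⟨D, hD⟩ := isBounded_iff.1 hB
  refine Integrable.mono'
    (integrableOn_const (C := ∫ u in closedBall 0 D, ‖u‖ ^ (-β) ∂μ) hB.measure_lt_top.ne)
    (hf.stronglyMeasurable.integral_prod_right' (ν := μ.restrict B)).aestronglyMeasurable
    ((ae_restrict_iff' hBm).2 (ae_of_all _ fun y hy => ?_))
  calc ‖∫ z in B, f y z ∂μ‖ ≤ ∫ z in B, ‖y - z‖ ^ (-β) ∂μ :=
        norm_integral_le_of_norm_le
          (integrableOn_rpow_neg_norm_sub hd hβ fun z hz => mem_closedBall.2 (hD hz hy))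
          (ae_of_all _ fun z => by rw [Real.norm_of_nonneg (hf0 y z)]; exact hfK y z)
    _ ≤ ∫ u in closedBall 0 D, ‖u‖ ^ (-β) ∂μ :=
        setIntegral_rpow_neg_norm_sub_le hd hβ fun z hz => mem_closedBall.2 (hD hz hy)

/-- `hc` excludes the diagonal because `‖0‖ ^ (-β) = 0` for `β ≠ 0`. -/
lemma mul_measureReal_le_setIntegral_setIntegral (hd : 1 ≤ Module.finrank ℝ E)
    (hβ : β < Module.finrank ℝ E) (hB : Bornology.IsBounded B) (hBm : MeasurableSet B)
    (hf : Measurable (Function.uncurry f))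
    (hf0 : ∀ y z, 0 ≤ f y z) (hfK : ∀ y z, f y z ≤ ‖y - z‖ ^ (-β))
    {S T : Set E} (hS : MeasurableSet S) (hSB : S ⊆ B) (hT : MeasurableSet T) (hTB : T ⊆ B)
    {c : ℝ} (hc : ∀ y ∈ S, ∀ z ∈ T, y ≠ z → c ≤ f y z) :
    c * μ.real S * μ.real T ≤ ∫ y in B, ∫ z in B, f y z ∂μ ∂μ := by
  have : Nontrivial E := Module.nontrivial_of_finrank_pos (R := ℝ) hd
  have hT_fin : μ T ≠ ⊤ := (hB.subset hTB).measure_lt_top.ne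
  have inner : ∀ y, S.indicator (fun _ => c * μ.real T) y ≤ ∫ z in B, f y z ∂μ := by
    intro y
    by_cases hy : y ∈ S
    · rw [indicator_of_mem hy]
      calc c * μ.real T = ∫ z in B, T.indicator (fun _ => c) z ∂μ := by
            rw [setIntegral_indicator hT, inter_eq_self_of_subset_right hTB, setIntegral_const,
              smul_eq_mul, mul_comm]
        _ ≤ ∫ z in B, f y z ∂μ := by
          refine integral_mono_ae
            ((integrableOn_const (C := c) hT_fin).integrable_indicator hT).integrableOn
            (integrableOn_of_le_rpow_neg_norm_sub hd hβ hB hf hf0 hfK (hSB hy)) ?_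
          filter_upwards [ae_restrict_of_ae (μ.ae_ne y)] with z hzy
          by_cases hz : z ∈ T
          · rw [indicator_of_mem hz]
            exact hc y hy z hz (Ne.symm hzy)
          · rw [indicator_of_notMem hz]
            exact hf0 y z
    · rw [indicator_of_notMem hy]
      exact integral_nonneg (hf0 y)
  calc c * μ.real S * μ.real T = ∫ y in B, S.indicator (fun _ => c * μ.real T) y ∂μ := by
        rw [setIntegral_indicator hS, inter_eq_self_of_subset_right hSB, setIntegral_const,
          smul_eq_mul]
        ring
    _ ≤ ∫ y in B, ∫ z in B, f y z ∂μ ∂μ :=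
        integral_mono ((integrableOn_const (C := c * μ.real T)
          (hB.subset hSB).measure_lt_top.ne).integrable_indicator hS).integrableOn
          (integrableOn_setIntegral_of_le_rpow_neg_norm_sub hd hβ hB hBm hf hf0 hfK) inner

end RieszKernel

theorem riesz_double_integral_lower_general (d : ℕ) (hd : 1 ≤ d) (β ε : ℝ)
    (hβ : 0 < β) (hβd : β < d) :
    ∃ κ : ℝ, 0 < κ ∧
      ∀ r : ℝ, 0 < r → r ≤ 1 - ε →
        ∀ x ∈ Metric.closedBall (0 : EuclideanSpace ℝ (Fin d)) (1 - ε),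
          ∀ w ∈ Metric.closedBall (0 : EuclideanSpace ℝ (Fin d)) (1 - ε),
            dist x w ≤ r →
              κ * r ^ (2 * (d : ℝ) - β) ≤
                ∫ y in Metric.closedBall (0 : EuclideanSpace ℝ (Fin d)) (1 - ε),
                  ∫ z in Metric.closedBall (0 : EuclideanSpace ℝ (Fin d)) (1 - ε),
                    (Metric.closedBall x r).indicator 1 y *
                      (Metric.closedBall w r).indicator 1 z * ‖y - z‖ ^ (-β) := by
  have hdim : Module.finrank ℝ (EuclideanSpace ℝ (Fin d)) = d := finrank_euclideanSpace_fin
  set ω := volume.real (ball (0 : EuclideanSpace ℝ (Fin d)) 1)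
  have hω : 0 < ω :=
    ENNReal.toReal_pos (measure_ball_pos volume _ one_pos).ne' measure_ball_lt_top.ne
  refine ⟨3 ^ (-β) * (ω / 2 ^ d) ^ 2, by positivity, fun r hr hrε x hx w hw hxw => ?_⟩
  obtain ⟨a, ha⟩ := exists_closedBall_subset_closedBall_zero_inter hx hr (by linarith)
  obtain ⟨b, hb⟩ := exists_closedBall_subset_closedBall_zero_inter hw hr (by linarith)
  have hvol (p : EuclideanSpace ℝ (Fin d)) :
      volume.real (closedBall p (r / 2)) = (r / 2) ^ d * ω := by
    rw [Measure.addHaar_real_closedBall _ _ (by positivity), hdim]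
  have hpow : r ^ (2 * (d : ℝ) - β) = r ^ (-β) * (r ^ d) ^ 2 := by
    rw [sub_eq_neg_add, Real.rpow_add hr, ← pow_mul, ← Real.rpow_natCast]
    push_cast
    ring_nf
  calc 3 ^ (-β) * (ω / 2 ^ d) ^ 2 * r ^ (2 * (d : ℝ) - β)
      = (3 * r) ^ (-β) * volume.real (closedBall a (r / 2)) *
          volume.real (closedBall b (r / 2)) := by
        rw [hvol, hvol, hpow, Real.mul_rpow (by norm_num) hr.le, div_pow, div_pow]
        ring
    _ ≤ _ := by
      refine mul_measureReal_le_setIntegral_setIntegral (by rwa [hdim]) (by rwa [hdim])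
        isBounded_closedBall measurableSet_closedBall
        (by fun_prop (disch := exact measurableSet_closedBall))
        (fun y z => indicator_one_mul_indicator_one_mul_nonneg _ _ y z (by positivity))
        (fun y z => indicator_one_mul_indicator_one_mul_le _ _ y z (by positivity))
        measurableSet_closedBall (ha.trans inter_subset_left)
        measurableSet_closedBall (hb.trans inter_subset_left) fun y hy z hz hyz => ?_
      have hyx := (ha hy).2
      have hzw := (hb hz).2
      rw [indicator_of_mem hyx, indicator_of_mem hzw, Pi.one_apply, Pi.one_apply, one_mul,
        one_mul]
      exact rpow_neg_three_mul_le_rpow_neg_norm_sub hβ.le hyx hxw hzw hyz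

/-- Riesz-kernel double integral lower bound: there is `κ > 0` such that for
every `0 < r ≤ 1-ε` and `x, w ∈ D_ε` with `|x-w| ≤ r`,
`∫_{D_ε}∫_{D_ε} 1_{|x-y|≤r} 1_{|w-z|≤r} |y-z|^(-β) dy dz ≥ κ r^(2d-β)`. -/
theorem riesz_double_integral_lower (d : ℕ) (hd : 1 ≤ d) (β ε : ℝ)
    (hβ : 0 < β) (hβd : β < d) (hε : ε ∈ Set.Ioo 0 (1 / 2 : ℝ)) :
    ∃ κ : ℝ, 0 < κ ∧
      ∀ r : ℝ, 0 < r → r ≤ 1 - ε →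
        ∀ x ∈ Metric.closedBall (0 : EuclideanSpace ℝ (Fin d)) (1 - ε),
          ∀ w ∈ Metric.closedBall (0 : EuclideanSpace ℝ (Fin d)) (1 - ε),
            dist x w ≤ r →
              κ * r ^ (2 * (d : ℝ) - β) ≤
                ∫ y in Metric.closedBall (0 : EuclideanSpace ℝ (Fin d)) (1 - ε),
                  ∫ z in Metric.closedBall (0 : EuclideanSpace ℝ (Fin d)) (1 - ε),
                    (Metric.closedBall x r).indicator 1 y *
                      (Metric.closedBall w r).indicator 1 z * ‖y - z‖ ^ (-β) :=
  riesz_double_integral_lower_general d hd β ε hβ hβd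
end

section
/- Let d ≥ 1, 0 < β < d and c > 0. There exists a constant C > 0 (depending only on d, β, c) such that for every t > 0 and all x, w ∈ ℝ^d, ∫_{ℝ^d} ∫_{ℝ^d} t^{−d/2} exp(−c|x−y|²/t) · t^{−d/2} exp(−c|w−z|²/t) · |y−z|^{−β} dy dz ≤ C t^{−β/2}. -/
/-!
On the unit ball the Riesz kernel is integrable because `β < d`, and off it the kernel is at
most `1`; hence `exp (-c‖b - z‖²) ‖a - z‖^(-β) ≤ 𝟙_{‖a - z‖ < 1} ‖a - z‖^(-β) + exp (-c‖b - z‖²)`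
bounds the Riesz potential of a unit Gaussian uniformly in `a, b`. The substitution `z = √t u`
turns the Gaussian at time `t` into a unit one and extracts the factor `t^(-β/2)`; integrating
the remaining Gaussian in `y`, of mass `(π/c)^(d/2)`, gives the bound.
-/

open MeasureTheory Metric Module Real

lemma mul_norm_rpow_neg_le_indicator_add {F : Type*} [SeminormedAddCommGroup F] {β g : ℝ}
    (hβ : 0 ≤ β) (hg₀ : 0 ≤ g) (hg₁ : g ≤ 1) (v : F) :
    g * ‖v‖ ^ (-β) ≤ (ball (0 : F) 1).indicator (fun v => ‖v‖ ^ (-β)) v + g := by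
  by_cases hv : v ∈ ball (0 : F) 1
  · rw [Set.indicator_of_mem hv]
    nlinarith [show 0 ≤ ‖v‖ ^ (-β) by positivity]
  · rw [Set.indicator_of_notMem hv, zero_add]
    have : ‖v‖ ^ (-β) ≤ 1 :=
      rpow_le_one_of_one_le_of_nonpos (by simpa using hv) (neg_nonpos.mpr hβ)
    nlinarith

lemma norm_sub_smul_eq_mul_norm {F : Type*} [NormedAddCommGroup F] [NormedSpace ℝ F] {R : ℝ}
    (hR : 0 < R) (a u : F) : ‖a - R • u‖ = R * ‖R⁻¹ • a - u‖ := by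
  calc ‖a - R • u‖ = ‖R • (R⁻¹ • a - u)‖ := by rw [smul_sub, smul_inv_smul₀ hR.ne']
    _ = R * ‖R⁻¹ • a - u‖ := by rw [norm_smul, norm_of_nonneg hR.le]

lemma sq_norm_sub_sqrt_smul_div {F : Type*} [NormedAddCommGroup F] [NormedSpace ℝ F] {t : ℝ}
    (ht : 0 < t) (a u : F) : ‖a - √t • u‖ ^ 2 / t = ‖(√t)⁻¹ • a - u‖ ^ 2 := by
  rw [norm_sub_smul_eq_mul_norm (sqrt_pos.mpr ht), mul_pow, sq_sqrt ht.le,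
    mul_div_cancel_left₀ _ ht.ne']

variable {E : Type*} [NormedAddCommGroup E] [InnerProductSpace ℝ E] [FiniteDimensional ℝ E]
  [MeasurableSpace E] [BorelSpace E]

lemma integrableOn_ball_norm_rpow_neg {β : ℝ} (hβ : 0 < β) (hβE : β < finrank ℝ E) (r : ℝ) :
    IntegrableOn (fun v : E => ‖v‖ ^ (-β)) (ball 0 r) := by
  refine integrableOn_ball_of_norm_le_rpow (C := 1) (α := β) ?_ hβE
    (ae_of_all _ fun v => ?_) (Measurable.aestronglyMeasurable (by fun_prop))
  · exact_mod_cast (hβ.trans hβE)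
  · rw [one_mul, norm_of_nonneg (by positivity)]

lemma integrable_exp_neg_mul_sq_norm {b : ℝ} (hb : 0 < b) :
    Integrable (fun v : E => exp (-b * ‖v‖ ^ 2)) := by
  refine (GaussianFourier.integrable_cexp_neg_mul_sq_norm_add (V := E) (b := (b : ℂ))
    (by simpa using hb) 0 0).norm.congr (ae_of_all _ fun v => ?_)
  simp only [Complex.norm_exp, inner_zero_left]
  norm_cast
  simp

lemma integral_exp_neg_mul_sq_norm_mul_norm_rpow_neg_le {β c : ℝ} (hβ : 0 < β)
    (hβE : β < finrank ℝ E) (hc : 0 < c) (a b : E) :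
    ∫ z, exp (-c * ‖b - z‖ ^ 2) * ‖a - z‖ ^ (-β) ≤
      (∫ v in ball (0 : E) 1, ‖v‖ ^ (-β)) + (π / c) ^ ((finrank ℝ E : ℝ) / 2) := by
  set F := (ball (0 : E) 1).indicator fun v => ‖v‖ ^ (-β)
  have hF : Integrable fun z => F (a - z) :=
    ((integrable_indicator_iff measurableSet_ball).mpr
      (integrableOn_ball_norm_rpow_neg hβ hβE 1)).comp_sub_left a
  have hG : Integrable fun z => exp (-c * ‖b - z‖ ^ 2) :=
    (integrable_exp_neg_mul_sq_norm hc).comp_sub_left b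
  calc ∫ z, exp (-c * ‖b - z‖ ^ 2) * ‖a - z‖ ^ (-β)
      ≤ ∫ z, F (a - z) + exp (-c * ‖b - z‖ ^ 2) :=
        integral_mono_of_nonneg (ae_of_all _ fun z => by positivity) (hF.add hG)
          (ae_of_all _ fun z => mul_norm_rpow_neg_le_indicator_add hβ.le (exp_nonneg _)
            (exp_le_one_iff.mpr (by nlinarith [norm_nonneg (b - z)])) (a - z))
    _ = (∫ v in ball (0 : E) 1, ‖v‖ ^ (-β)) + (π / c) ^ ((finrank ℝ E : ℝ) / 2) := by
        rw [integral_add hF hG, integral_sub_left_eq_self F volume a,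
          integral_indicator measurableSet_ball,
          integral_sub_left_eq_self (fun v => exp (-c * ‖v‖ ^ 2)) volume b,
          GaussianFourier.integral_rexp_neg_mul_sq_norm hc]

lemma integral_eq_rpow_mul_integral_comp_sqrt_smul {t : ℝ} (ht : 0 < t) (f : E → ℝ) :
    ∫ z, f z = t ^ ((finrank ℝ E : ℝ) / 2) * ∫ u, f (√t • u) := by
  rw [Measure.integral_comp_smul_of_nonneg volume f √t (hR := sqrt_nonneg t), smul_eq_mul,
    ← mul_assoc, sqrt_eq_rpow, ← rpow_natCast, ← rpow_mul ht.le, one_div_mul_eq_div,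
    mul_inv_cancel₀ (by positivity), one_mul]

lemma integral_gaussian_kernel {c t : ℝ} (hc : 0 < c) (ht : 0 < t) (x : E) :
    ∫ y, t ^ (-(finrank ℝ E : ℝ) / 2) * exp (-c * ‖x - y‖ ^ 2 / t) =
      (π / c) ^ ((finrank ℝ E : ℝ) / 2) := by
  rw [integral_eq_rpow_mul_integral_comp_sqrt_smul ht]
  simp_rw [mul_div_assoc, sq_norm_sub_sqrt_smul_div ht]
  rw [integral_const_mul, ← mul_assoc, ← rpow_add ht, ← add_div, add_neg_cancel, zero_div,
    rpow_zero, one_mul, integral_sub_left_eq_self (fun v => exp (-c * ‖v‖ ^ 2)) volume,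
    GaussianFourier.integral_rexp_neg_mul_sq_norm hc]

lemma integral_gaussian_kernel_mul_norm_rpow_neg_le {β c t : ℝ} (hβ : 0 < β)
    (hβE : β < finrank ℝ E) (hc : 0 < c) (ht : 0 < t) (w y : E) :
    ∫ z, t ^ (-(finrank ℝ E : ℝ) / 2) * exp (-c * ‖w - z‖ ^ 2 / t) * ‖y - z‖ ^ (-β) ≤
      t ^ (-β / 2) * ((∫ v in ball (0 : E) 1, ‖v‖ ^ (-β)) + (π / c) ^ ((finrank ℝ E : ℝ) / 2)) := by
  rw [integral_eq_rpow_mul_integral_comp_sqrt_smul ht]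
  simp_rw [mul_div_assoc, sq_norm_sub_sqrt_smul_div ht,
    norm_sub_smul_eq_mul_norm (sqrt_pos.mpr ht), mul_rpow (sqrt_nonneg t) (norm_nonneg _)]
  have hsqrt : √t ^ (-β) = t ^ (-β / 2) := by
    rw [sqrt_eq_rpow, ← rpow_mul ht.le]
    ring_nf
  simp_rw [hsqrt, mul_mul_mul_comm _ _ (t ^ (-β / 2)), integral_const_mul, ← mul_assoc]
  rw [← rpow_add ht, ← add_div, add_neg_cancel, zero_div, rpow_zero, one_mul]
  gcongr
  exact integral_exp_neg_mul_sq_norm_mul_norm_rpow_neg_le hβ hβE hc _ _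

theorem gaussian_riesz_double_integral_upper_general (d : ℕ) (β c : ℝ)
    (hβ : 0 < β) (hβd : β < d) (hc : 0 < c) :
    ∃ C : ℝ, 0 < C ∧
      ∀ t : ℝ, 0 < t → ∀ x w : EuclideanSpace ℝ (Fin d),
        (∫ y : EuclideanSpace ℝ (Fin d), ∫ z : EuclideanSpace ℝ (Fin d),
            t ^ (-(d : ℝ) / 2) * Real.exp (-c * ‖x - y‖ ^ 2 / t) *
              (t ^ (-(d : ℝ) / 2) * Real.exp (-c * ‖w - z‖ ^ 2 / t)) * ‖y - z‖ ^ (-β)) ≤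
          C * t ^ (-β / 2) := by
  have hdim : finrank ℝ (EuclideanSpace ℝ (Fin d)) = d := finrank_euclideanSpace_fin
  set M := ∫ v in ball (0 : EuclideanSpace ℝ (Fin d)) 1, ‖v‖ ^ (-β)
  set G := (π / c) ^ ((d : ℝ) / 2)
  have hM : 0 ≤ M := setIntegral_nonneg measurableSet_ball fun v _ => by positivity
  have hG : 0 < G := by positivity
  refine ⟨(M + G) * G, by positivity, fun t ht x w => ?_⟩
  have hmass := integral_gaussian_kernel hc ht x
  have hriesz := integral_gaussian_kernel_mul_norm_rpow_neg_le hβ (by rwa [hdim]) hc ht w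
  rw [hdim] at hmass hriesz
  calc _ = ∫ y, t ^ (-(d : ℝ) / 2) * exp (-c * ‖x - y‖ ^ 2 / t) *
        ∫ z, t ^ (-(d : ℝ) / 2) * exp (-c * ‖w - z‖ ^ 2 / t) * ‖y - z‖ ^ (-β) := by
        simp_rw [← integral_const_mul, mul_assoc]
    _ ≤ ∫ y, t ^ (-(d : ℝ) / 2) * exp (-c * ‖x - y‖ ^ 2 / t) * (t ^ (-β / 2) * (M + G)) :=
        integral_mono_of_nonneg (ae_of_all _ fun y => mul_nonneg (by positivity)
            (integral_nonneg fun z => by positivity))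
          ((Integrable.of_integral_ne_zero (hmass ▸ hG.ne')).mul_const _)
          (ae_of_all _ fun y => mul_le_mul_of_nonneg_left (hriesz y) (by positivity))
    _ = (M + G) * G * t ^ (-β / 2) := by rw [integral_mul_const, hmass]; ring

/-- Upper bound for the Riesz-kernel-smeared product of two Gaussian kernels:
there is `C > 0` such that for all `t > 0` and `x, w ∈ ℝ^d`,
`∫∫ t^(-d/2) e^(-c|x-y|²/t) t^(-d/2) e^(-c|w-z|²/t) |y-z|^(-β) dy dz ≤ C t^(-β/2)`. -/
theorem gaussian_riesz_double_integral_upper (d : ℕ) (hd : 1 ≤ d) (β c : ℝ)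
    (hβ : 0 < β) (hβd : β < d) (hc : 0 < c) :
    ∃ C : ℝ, 0 < C ∧
      ∀ t : ℝ, 0 < t → ∀ x w : EuclideanSpace ℝ (Fin d),
        (∫ y : EuclideanSpace ℝ (Fin d), ∫ z : EuclideanSpace ℝ (Fin d),
            t ^ (-(d : ℝ) / 2) * Real.exp (-c * ‖x - y‖ ^ 2 / t) *
              (t ^ (-(d : ℝ) / 2) * Real.exp (-c * ‖w - z‖ ^ 2 / t)) * ‖y - z‖ ^ (-β)) ≤
          C * t ^ (-β / 2) :=
  gaussian_riesz_double_integral_upper_general d β c hβ hβd hc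
end

section
/- Let θ ∈ (0, 1]. There exist positive constants C and c (depending only on θ) such that for all x ≥ 0, ∑_{n=0}^{∞} xⁿ/(n!)^{θ} ≥ C exp( c x^{1/θ} ). -/
/-!
With `y = x ^ (1 / θ)` the `n`-th term of the series is `(yⁿ / n!) ^ θ`. Since `t ↦ t ^ θ` is
subadditive on `[0, ∞)` for `θ ≤ 1`, the series dominates `(∑ yⁿ / n!) ^ θ = exp (θ y)`;
so `C = 1` and `c = θ` work.
-/

open Filter Nat

namespace Real

lemma rpow_sum_le_sum_rpow {ι : Type*} (s : Finset ι) {f : ι → ℝ}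
    (hf : ∀ i ∈ s, 0 ≤ f i) {p : ℝ} (hp0 : 0 < p) (hp1 : p ≤ 1) :
    (∑ i ∈ s, f i) ^ p ≤ ∑ i ∈ s, f i ^ p :=
  Finset.le_sum_of_subadditive_on_pred (· ^ p) (0 ≤ ·) (zero_rpow hp0.ne').le
    (fun _ _ ha hb => rpow_add_le_add_rpow ha hb hp0.le hp1) (fun _ _ => add_nonneg) f hf

lemma rpow_tsum_le_tsum_rpow {ι : Type*} {f : ι → ℝ} {p : ℝ} (hf : ∀ i, 0 ≤ f i)
    (hs : Summable f) (hsp : Summable fun i => f i ^ p) (hp0 : 0 < p) (hp1 : p ≤ 1) :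
    (∑' i, f i) ^ p ≤ ∑' i, f i ^ p :=
  le_of_tendsto' (hs.hasSum.rpow_const (Or.inr hp0.le)) fun s =>
    (rpow_sum_le_sum_rpow s (fun i _ => hf i) hp0 hp1).trans
      (hsp.sum_le_tsum s fun i _ => rpow_nonneg (hf i) p)

end Real

lemma summable_pow_div_factorial_rpow {θ : ℝ} (hθ : 0 < θ) (x : ℝ) :
    Summable fun n : ℕ => x ^ n / (n ! : ℝ) ^ θ := by
  refine summable_of_ratio_norm_eventually_le (r := 1 / 2) (by norm_num) ?_
  have hgrowth : Tendsto (fun n : ℕ => ((n + 1 : ℕ) : ℝ) ^ θ) atTop atTop :=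
    (tendsto_rpow_atTop hθ).comp (tendsto_natCast_atTop_atTop.comp (tendsto_add_atTop_nat 1))
  filter_upwards [hgrowth.eventually_ge_atTop (2 * |x|)] with n hn
  have hpos : (0 : ℝ) < ((n + 1 : ℕ) : ℝ) ^ θ := by positivity
  have hstep : x ^ (n + 1) / ((n + 1)! : ℝ) ^ θ =
      x / ((n + 1 : ℕ) : ℝ) ^ θ * (x ^ n / (n ! : ℝ) ^ θ) := by
    rw [Nat.factorial_succ, Nat.cast_mul, Real.mul_rpow (by positivity) (by positivity), pow_succ]
    field_simp
  rw [hstep, norm_mul, norm_div, Real.norm_of_nonneg hpos.le, Real.norm_eq_abs]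
  refine mul_le_mul_of_nonneg_right ?_ (norm_nonneg _)
  rw [div_le_iff₀ hpos]
  linarith

lemma exp_mul_le_tsum_rpow_pow_div_factorial_rpow {θ : ℝ} (hθ0 : 0 < θ) (hθ1 : θ ≤ 1)
    {y : ℝ} (hy : 0 ≤ y) :
    Real.exp (θ * y) ≤ ∑' n : ℕ, (y ^ θ) ^ n / (n ! : ℝ) ^ θ := by
  have hexp : HasSum (fun n : ℕ => y ^ n / n !) (Real.exp y) := by
    rw [Real.exp_eq_exp_ℝ]; exact NormedSpace.expSeries_div_hasSum_exp y
  have hterm (n : ℕ) : (y ^ n / n !) ^ θ = (y ^ θ) ^ n / (n ! : ℝ) ^ θ := by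
    rw [Real.div_rpow (by positivity) (by positivity), Real.rpow_pow_comm hy]
  calc Real.exp (θ * y) = (∑' n : ℕ, y ^ n / n !) ^ θ := by
        rw [hexp.tsum_eq, mul_comm, Real.exp_mul]
    _ ≤ ∑' n : ℕ, (y ^ n / n !) ^ θ :=
        Real.rpow_tsum_le_tsum_rpow (fun n => by positivity) hexp.summable
          (by simpa only [hterm] using summable_pow_div_factorial_rpow hθ0 _) hθ0 hθ1
    _ = _ := by simp only [hterm]

/-- Lower bound for the Mittag-Leffler-type series: for `θ ∈ (0,1]` there are
`C, c > 0` with `∑ xⁿ/(n!)^θ ≥ C exp(c x^(1/θ))` for all `x ≥ 0`. -/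
theorem mittag_leffler_lower (θ : ℝ) (hθ : θ ∈ Set.Ioc (0 : ℝ) 1) :
    ∃ C c : ℝ, 0 < C ∧ 0 < c ∧
      ∀ x : ℝ, 0 ≤ x →
        C * Real.exp (c * x ^ (1 / θ)) ≤ ∑' n : ℕ, x ^ n / (n.factorial : ℝ) ^ θ := by
  refine ⟨1, θ, one_pos, hθ.1, fun x hx => ?_⟩
  have hroot : (x ^ (1 / θ)) ^ θ = x := by
    rw [one_div, Real.rpow_inv_rpow hx hθ.1.ne']
  simpa only [one_mul, hroot] using
    exp_mul_le_tsum_rpow_pow_div_factorial_rpow hθ.1 hθ.2 (Real.rpow_nonneg hx (1 / θ))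
end
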